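/- Let G be a 3-regular finite simple graph on n vertices (so n is even, n ≥ 4), and let q = 3n + 4. Then δ_edit(G[q], D_{n,q}) ≤ n if and only if G has a Hamiltonian cycle. -/

import Mathlib

open SimpleGraph

section MismatchDefs

variable {V W : Type*}

/-- The mismatch graph `G^π − H`: the symmetric difference of the image of `G` under the
bijection `π` with `H`, as a graph on `V(H)`. Its edges are the positive edges
(edges of `G^π` not in `H`) together with the negative edges (edges of `H` not in `G^π`). -/
def mismatchGraph (G : SimpleGraph V) (H : SimpleGraph W) (π : V ≃ W) : SimpleGraph W :=
  symmDiff (G.map π.toEmbedding) H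

/-- The degree of a vertex in the mismatch graph `G^π − H`. -/
noncomputable def mismatchDeg (G : SimpleGraph V) (H : SimpleGraph W) (π : V ≃ W) (x : W) : ℕ :=
  ((mismatchGraph G H π).neighborSet x).ncard

/-- The number of positive edges of `G^π − H` incident to `x`. -/
noncomputable def posDeg (G : SimpleGraph V) (H : SimpleGraph W) (π : V ≃ W) (x : W) : ℕ :=
  ((G.map π.toEmbedding).neighborSet x \ H.neighborSet x).ncard

/-- The number of negative edges of `G^π − H` incident to `x`. -/
noncomputable def negDeg (G : SimpleGraph V) (H : SimpleGraph W) (π : V ≃ W) (x : W) : ℕ :=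
  (H.neighborSet x \ (G.map π.toEmbedding).neighborSet x).ncard

/-- The maximum mismatch count `MMC(π)`: the maximum degree of the mismatch graph `G^π − H`. -/
noncomputable def MMC [Fintype W] (G : SimpleGraph V) (H : SimpleGraph W) (π : V ≃ W) : ℕ :=
  Finset.univ.sup (mismatchDeg G H π)

/-- The edit mismatch norm `μ_edit(G^π, H)`: the number of edges of the mismatch graph. -/
noncomputable def muEdit (G : SimpleGraph V) (H : SimpleGraph W) (π : V ≃ W) : ℕ :=
  (mismatchGraph G H π).edgeSet.ncard

/-- The edit distance `δ_edit(G, H)`: the minimum of `μ_edit(G^π, H)` over all bijections. -/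
noncomputable def deltaEdit (G : SimpleGraph V) (H : SimpleGraph W) : ℕ :=
  ⨅ π : V ≃ W, muEdit G H π

open Classical in
/-- The signed adjacency matrix of the mismatch graph `G^π − H`:
`+1` on positive edges, `−1` on negative edges, `0` otherwise. -/
noncomputable def signedAdj (G : SimpleGraph V) (H : SimpleGraph W) (π : V ≃ W) :
    Matrix W W ℝ := fun x y =>
  if (G.map π.toEmbedding).Adj x y ∧ ¬ H.Adj x y then 1
  else if H.Adj x y ∧ ¬ (G.map π.toEmbedding).Adj x y then -1 else 0

/-- The `ℓ_p` norm of a vector over a finite index type. -/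
noncomputable def lpNorm [Fintype W] (p : ℝ) (x : W → ℝ) : ℝ :=
  (∑ i, |x i| ^ p) ^ p⁻¹

/-- The `ℓ_p`-operator norm of a matrix: `sup_{x ≠ 0} ‖Mx‖_p / ‖x‖_p`. -/
noncomputable def lpOpNorm [Fintype W] (p : ℝ) (M : Matrix W W ℝ) : ℝ :=
  ⨆ x : {x : W → ℝ // x ≠ 0}, lpNorm p (M.mulVec x.1) / lpNorm p x.1

end MismatchDefs

/-- `G[q]`: attach an auxiliary `(q+1)`-clique to each vertex `v` of `G`.
The clique vertices of `v` are `Sum.inr (v, i)` for `i : Fin (q+1)`; the clique is joined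
to `v` via the edge `{v^[1], v}`, where `v^[1]` is `Sum.inr (v, 0)`. -/
def extendCliques {V : Type*} (G : SimpleGraph V) (q : ℕ) :
    SimpleGraph (V ⊕ V × Fin (q + 1)) :=
  SimpleGraph.fromRel (fun a b =>
    match a, b with
    | Sum.inl u, Sum.inl v => G.Adj u v
    | Sum.inl u, Sum.inr (v, i) => u = v ∧ i = 0
    | Sum.inr _, Sum.inl _ => False
    | Sum.inr (u, _), Sum.inr (v, _) => u = v)

/-- `D_{n,q}`: the graph `C_n[q]` together with the edges `{u^[1], v^[1]}` for `{u,v}`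
ranging over the perfect matching `{{2i, 2i+1} : 0 ≤ i < n/2}` of the cycle `C_n`
(`n` even). -/
def Dgraph (n q : ℕ) : SimpleGraph (Fin n ⊕ Fin n × Fin (q + 1)) :=
  extendCliques (SimpleGraph.cycleGraph n) q ⊔
    SimpleGraph.fromRel (fun a b =>
      match a, b with
      | Sum.inr (u, i), Sum.inr (v, j) => i = 0 ∧ j = 0 ∧ u.val / 2 = v.val / 2
      | _, _ => False)

/-!
If `G` has a Hamiltonian cycle, number `V(G)` along it and send the clique of each vertex of
`G[q]` onto the clique of the corresponding vertex of `D_{n,q}`. The mismatches are then the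
`3n/2 - n = n/2` edges of `G` off the cycle and the `n/2` matching edges of `D_{n,q}`.

Conversely, let `π` have at most `n` mismatches. Since `q = 3n + 4`, a clique vertex of `G[q]`
sent to a vertex of `C_n`, or a clique of `G[q]` split between two cliques of `D_{n,q}`, would
give a single vertex more than `n` positive mismatch edges. So `π` maps cliques into cliques and
restricts to a bijection `σ : V(G) ≃ V(C_n)`; every matching edge of `D_{n,q}` is then a negative
mismatch, and the canonical lift of `σ`, whose cost is `|E(G^σ) Δ E(C_n)| + n/2`, is no more
expensive than `π`. As `|E(G)| = 3n/2` and `|E(C_n)| = n`, this cost is at most `n` only when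
`C_n ⊆ G^σ`, that is, when `σ⁻¹` traces a Hamiltonian cycle of `G`.
-/

lemma Set.subset_iff_ncard_symmDiff_add_le {α : Type*} {s t : Set α} (hs : s.Finite)
    (ht : t.Finite) : t ⊆ s ↔ (symmDiff s t).ncard + t.ncard ≤ s.ncard := by
  rw [Set.symmDiff_def, Set.ncard_union_eq disjoint_sdiff_sdiff hs.sdiff ht.sdiff,
    ← Set.ncard_inter_add_ncard_sdiff_eq_ncard s t hs,
    ← Set.ncard_inter_add_ncard_sdiff_eq_ncard t s ht, Set.inter_comm, ← Set.sdiff_eq_empty,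
    ← Set.ncard_eq_zero ht.sdiff]
  omega

lemma Equiv.exists_apply_inl_eq_inl {α β α' β' : Type*} (e : α ⊕ β ≃ α' ⊕ β')
    (f : β ≃ β') (hf : ∀ b, e (.inr b) = .inr (f b)) :
    ∃ σ : α ≃ α', ∀ a, e (.inl a) = .inl (σ a) := by
  have hl : ∀ a, ∃ a', e (.inl a) = .inl a' := by
    intro a
    rcases hx : e (.inl a) with a' | b'
    · exact ⟨a', rfl⟩
    · rw [← f.apply_symm_apply b', ← hf] at hx
      cases e.injective hx
  have hr : ∀ a', ∃ a, e.symm (.inl a') = .inl a := by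
    intro a'
    rcases hx : e.symm (.inl a') with a | b
    · exact ⟨a, rfl⟩
    · have := hf b
      rw [← hx, e.apply_symm_apply] at this
      cases this
  choose σ hσ using hl
  choose τ hτ using hr
  refine ⟨⟨σ, τ, fun a ↦ ?_, fun a' ↦ ?_⟩, hσ⟩
  · have := hτ (σ a)
    rw [← hσ, e.symm_apply_apply] at this
    exact (Sum.inl_injective this).symm
  · have := hσ (τ a')
    rw [← hτ, e.apply_symm_apply] at this
    exact (Sum.inl_injective this).symm

namespace SimpleGraph

@[simp] lemma map_equiv_adj {V W : Type*} {G : SimpleGraph V} (e : V ≃ W) {x y : W} :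
    (G.map e).Adj x y ↔ G.Adj (e.symm x) (e.symm y) := by
  rw [← Equiv.coe_toEmbedding, ← comap_symm]
  rfl

lemma ncard_edgeSet_map {V W : Type*} [Finite V] (f : V ↪ W) (G : SimpleGraph V) :
    (G.map f).edgeSet.ncard = G.edgeSet.ncard := by
  rw [edgeSet_map, Set.ncard_image_of_injective _ f.sym2Map.injective]

lemma edgeSet_symmDiff {V : Type*} (G H : SimpleGraph V) :
    (symmDiff G H).edgeSet = symmDiff G.edgeSet H.edgeSet := by
  rw [symmDiff_def, Set.symmDiff_def, edgeSet_sup, edgeSet_sdiff, edgeSet_sdiff]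

lemma IsRegularOfDegree.two_mul_ncard_edgeSet {V : Type*} [Fintype V] {G : SimpleGraph V}
    [DecidableRel G.Adj] {d : ℕ} (h : G.IsRegularOfDegree d) :
    2 * G.edgeSet.ncard = d * Fintype.card V := by
  rw [← coe_edgeFinset, Set.ncard_coe_finset, ← sum_degrees_eq_twice_card_edges,
    Finset.sum_congr rfl fun v _ ↦ h v, Finset.sum_const, Finset.card_univ, smul_eq_mul, mul_comm]

lemma cycleGraph_isRegularOfDegree_two {n : ℕ} (hn : 3 ≤ n) :
    (cycleGraph n).IsRegularOfDegree 2 := by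
  obtain ⟨m, rfl⟩ := Nat.exists_eq_add_of_le' hn
  exact fun _ ↦ cycleGraph_degree_three_le

lemma isHamiltonian_iff_cycleGraph_isContained {V : Type*} [Fintype V] [DecidableEq V]
    {G : SimpleGraph V} (hV : 3 ≤ Fintype.card V) :
    G.IsHamiltonian ↔ cycleGraph (Fintype.card V) ⊑ G := by
  rw [cycleGraph_isContained_iff (by omega)]
  simp only [IsHamiltonian, Walk.isHamiltonianCycle_iff_isCycle_and_length_eq]
  exact ⟨fun h ↦ h (by omega), fun h _ ↦ h⟩

lemma isContained_iff_exists_le_map {V W : Type*} [Fintype V] [Fintype W]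
    (h : Fintype.card W = Fintype.card V) {G : SimpleGraph V} {H : SimpleGraph W} :
    H ⊑ G ↔ ∃ σ : V ≃ W, H ≤ G.map σ.toEmbedding := by
  rw [isContained_iff_exists_le_comap]
  constructor
  · rintro ⟨f, hf⟩
    let e := Equiv.ofBijective f
      ((Fintype.bijective_iff_injective_and_card f).mpr ⟨f.injective, h⟩)
    refine ⟨e.symm, ?_⟩
    rwa [← comap_symm, Equiv.symm_symm]
  · rintro ⟨σ, hσ⟩
    exact ⟨σ.symm.toEmbedding, by rwa [comap_symm]⟩

lemma isHamiltonian_iff_exists_cycleGraph_le_map {V : Type*} [Fintype V] [DecidableEq V]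
    {G : SimpleGraph V} {n : ℕ} (hV : Fintype.card V = n) (hn : 3 ≤ n) :
    G.IsHamiltonian ↔ ∃ σ : V ≃ Fin n, cycleGraph n ≤ G.map σ.toEmbedding := by
  subst hV
  rw [isHamiltonian_iff_cycleGraph_isContained hn, isContained_iff_exists_le_map (by simp)]

section Mismatch

variable {V W : Type*} {G : SimpleGraph V} {H : SimpleGraph W} {π : V ≃ W}

lemma mismatchGraph_adj {x y : W} :
    (mismatchGraph G H π).Adj x y ↔
      (G.map π.toEmbedding).Adj x y ∧ ¬H.Adj x y ∨
        H.Adj x y ∧ ¬(G.map π.toEmbedding).Adj x y := by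
  simp only [mismatchGraph, symmDiff_def, sup_adj, sdiff_adj]

lemma posDeg_le_muEdit [Finite W] (x : W) : posDeg G H π x ≤ muEdit G H π := by
  refine Set.ncard_le_ncard_of_injOn (fun y ↦ s(x, y)) (fun y hy ↦ ?_)
    (fun y _ z _ h ↦ Sym2.congr_right.mp h)
  exact mismatchGraph_adj.mpr (Or.inl hy)

/-- Every edge from `u` to `B` becomes a positive mismatch edge at `π u`, unless it lands on a
neighbour of `π u` in `H`. -/
lemma ncard_le_posDeg_add [Finite W] {u : V} {B : Set V} (hB : ∀ b ∈ B, G.Adj u b) :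
    B.ncard ≤ posDeg G H π (π u) + (π '' B ∩ H.neighborSet (π u)).ncard := by
  have hpos : π '' B \ H.neighborSet (π u) ⊆
      (G.map π.toEmbedding).neighborSet (π u) \ H.neighborSet (π u) := by
    rintro _ ⟨⟨b, hb, rfl⟩, hbH⟩
    exact ⟨(map_adj _ _ _ _).mpr ⟨u, b, hB b hb, rfl, rfl⟩, hbH⟩
  rw [← Set.ncard_image_of_injective B π.injective,
    ← Set.ncard_inter_add_ncard_sdiff_eq_ncard (π '' B) (H.neighborSet (π u)), add_comm]
  exact Nat.add_le_add_right (Set.ncard_le_ncard hpos) _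

lemma mismatchGraph_sup_of_disjoint {M : SimpleGraph W} (hG : Disjoint (G.map π.toEmbedding) M)
    (hH : Disjoint H M) : mismatchGraph G (H ⊔ M) π = mismatchGraph G H π ⊔ M := by
  rw [mismatchGraph, mismatchGraph, ← hH.symmDiff_eq_sup, ← symmDiff_assoc,
    (disjoint_sup_left.mpr ⟨hG, hH⟩).mono_left symmDiff_le_sup |>.symmDiff_eq_sup]

lemma deltaEdit_le_muEdit (π : V ≃ W) : deltaEdit G H ≤ muEdit G H π :=
  ciInf_le (OrderBot.bddBelow _) π

lemma exists_muEdit_eq_deltaEdit [Nonempty (V ≃ W)] : ∃ π, muEdit G H π = deltaEdit G H :=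
  ciInf_mem _

end Mismatch

lemma le_map_iff_muEdit_add_le {V W : Type*} [Finite W] (G : SimpleGraph V) (H : SimpleGraph W)
    (σ : V ≃ W) :
    H ≤ G.map σ.toEmbedding ↔ muEdit G H σ + H.edgeSet.ncard ≤ G.edgeSet.ncard := by
  have : Finite V := .of_equiv _ σ.symm
  rw [muEdit, mismatchGraph, ← ncard_edgeSet_map σ.toEmbedding G, ← edgeSet_subset_edgeSet,
    edgeSet_symmDiff, Set.subset_iff_ncard_symmDiff_add_le (Set.toFinite _) (Set.toFinite _)]

section ExtendCliques

variable {V W : Type*} {G : SimpleGraph V} {q : ℕ}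

@[simp] lemma extendCliques_adj_inl_inl {u v : V} :
    (extendCliques G q).Adj (.inl u) (.inl v) ↔ G.Adj u v := by
  simp only [extendCliques, fromRel_adj, ne_eq, Sum.inl.injEq]
  exact ⟨fun h ↦ h.2.elim id .symm, fun h ↦ ⟨h.ne, .inl h⟩⟩

@[simp] lemma extendCliques_adj_inl_inr {u v : V} {i : Fin (q + 1)} :
    (extendCliques G q).Adj (.inl u) (.inr (v, i)) ↔ u = v ∧ i = 0 := by
  simp [extendCliques]

@[simp] lemma extendCliques_adj_inr_inl {u v : V} {i : Fin (q + 1)} :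
    (extendCliques G q).Adj (.inr (v, i)) (.inl u) ↔ u = v ∧ i = 0 := by
  rw [adj_comm, extendCliques_adj_inl_inr]

@[simp] lemma extendCliques_adj_inr_inr {u v : V} {i j : Fin (q + 1)} :
    (extendCliques G q).Adj (.inr (u, i)) (.inr (v, j)) ↔ u = v ∧ i ≠ j := by
  simp only [extendCliques, fromRel_adj, ne_eq, Sum.inr.injEq, Prod.mk.injEq]
  grind

variable (q) in
def extendCliquesEquiv (σ : V ≃ W) : V ⊕ V × Fin (q + 1) ≃ W ⊕ W × Fin (q + 1) :=
  σ.sumCongr (σ.prodCongr (.refl _))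

lemma map_extendCliques (σ : V ≃ W) :
    (extendCliques G q).map (extendCliquesEquiv q σ) = extendCliques (G.map σ) q := by
  ext x y
  rcases x with a | ⟨a, i⟩ <;> rcases y with b | ⟨b, j⟩ <;> simp [extendCliquesEquiv]

lemma mismatchGraph_extendCliques (H : SimpleGraph W) (σ : V ≃ W) :
    mismatchGraph (extendCliques G q) (extendCliques H q) (extendCliquesEquiv q σ) =
      (mismatchGraph G H σ).map Function.Embedding.inl := by
  ext x y
  rcases x with a | ⟨a, i⟩ <;> rcases y with b | ⟨b, j⟩ <;>
    simp [extendCliquesEquiv, mismatchGraph_adj]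

end ExtendCliques

def pairGraph (n : ℕ) : SimpleGraph (Fin n) :=
  fromRel fun u v ↦ u.val / 2 = v.val / 2

instance (n : ℕ) : DecidableRel (pairGraph n).Adj :=
  fun _ _ ↦ inferInstanceAs (Decidable (_ ∧ _))

lemma pairGraph_isRegularOfDegree_one {n : ℕ} (hn : Even n) :
    (pairGraph n).IsRegularOfDegree 1 := by
  obtain ⟨r, rfl⟩ := hn
  intro u
  rw [← card_neighborFinset_eq_degree, Finset.card_eq_one]
  refine ⟨⟨2 * (u / 2) + (1 - u % 2), by omega⟩,
    Finset.eq_singleton_iff_unique_mem.mpr ⟨?_, ?_⟩⟩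
  · rw [mem_neighborFinset]
    simp [pairGraph, Fin.ext_iff]
    omega
  · intro v hv
    rw [mem_neighborFinset] at hv
    simp [pairGraph, Fin.ext_iff] at hv ⊢
    omega

/-- The edges `{u^[1], v^[1]}` of `D_{n,q}`, where `u^[1] = .inr (u, 0)`. -/
def cliqueMatching (n q : ℕ) : SimpleGraph (Fin n ⊕ Fin n × Fin (q + 1)) :=
  (pairGraph n).map ((Function.Embedding.sectL (Fin n) (0 : Fin (q + 1))).trans .inr)

lemma Dgraph_eq_sup (n q : ℕ) :
    Dgraph n q = extendCliques (cycleGraph n) q ⊔ cliqueMatching n q := by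
  ext x y
  rcases x with a | ⟨a, i⟩ <;> rcases y with b | ⟨b, j⟩ <;>
    simp [Dgraph, cliqueMatching, pairGraph]
  grind

lemma disjoint_extendCliques_cliqueMatching {n q : ℕ} (H : SimpleGraph (Fin n)) :
    Disjoint (extendCliques H q) (cliqueMatching n q) := by
  rw [disjoint_left]
  intro x y hxy hM
  obtain ⟨u, v, -, rfl, rfl⟩ := (map_adj _ _ _ _).mp hM
  simp at hxy

lemma mismatchGraph_extendCliquesEquiv {V : Type*} {n : ℕ} (G : SimpleGraph V) (q : ℕ)
    (σ : V ≃ Fin n) :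
    mismatchGraph (extendCliques G q) (Dgraph n q) (extendCliquesEquiv q σ) =
      (mismatchGraph G (cycleGraph n) σ).map Function.Embedding.inl ⊔ cliqueMatching n q := by
  rw [Dgraph_eq_sup, mismatchGraph_sup_of_disjoint, mismatchGraph_extendCliques]
  · rw [Equiv.coe_toEmbedding, map_extendCliques]
    exact disjoint_extendCliques_cliqueMatching _
  · exact disjoint_extendCliques_cliqueMatching _

lemma muEdit_extendCliquesEquiv {V : Type*} [Finite V] {n : ℕ} (G : SimpleGraph V) (q : ℕ)
    (σ : V ≃ Fin n) :
    muEdit (extendCliques G q) (Dgraph n q) (extendCliquesEquiv q σ) =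
      muEdit G (cycleGraph n) σ + (pairGraph n).edgeSet.ncard := by
  have hdisj : Disjoint ((mismatchGraph G (cycleGraph n) σ).map Function.Embedding.inl)
      (cliqueMatching n q) := by
    rw [disjoint_left]
    rintro _ _ hX hM
    obtain ⟨u, v, -, rfl, rfl⟩ := (map_adj _ _ _ _).mp hX
    obtain ⟨_, _, -, h, -⟩ := (map_adj _ _ _ _).mp hM
    simp at h
  rw [muEdit, mismatchGraph_extendCliquesEquiv, edgeSet_sup,
    Set.ncard_union_eq (disjoint_edgeSet.mpr hdisj), ncard_edgeSet_map, cliqueMatching,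
    ncard_edgeSet_map, muEdit]

lemma ncard_neighborSet_Dgraph_inl_le {n q : ℕ} (hn : 2 ≤ n) (w : Fin n) :
    ((Dgraph n q).neighborSet (.inl w)).ncard ≤ 3 := by
  obtain ⟨m, rfl⟩ := Nat.exists_eq_add_of_le' hn
  have hsub : (Dgraph (m + 2) q).neighborSet (.inl w) ⊆
      {.inl (w - 1), .inl (w + 1), .inr (w, 0)} := by
    rintro (b | ⟨b, j⟩) hb
    · have : b ∈ (cycleGraph (m + 2)).neighborSet w := by
        simpa [Dgraph_eq_sup, cliqueMatching] using hb
      rw [cycleGraph_neighborSet] at this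
      aesop
    · simp_all [Dgraph_eq_sup, cliqueMatching]
  refine (Set.ncard_le_ncard hsub).trans ((Set.ncard_insert_le _ _).trans ?_)
  grw [Set.ncard_insert_le, Set.ncard_singleton]

lemma ncard_neighborSet_Dgraph_inr_sdiff_le {n q : ℕ} (w : Fin n) (j : Fin (q + 1)) :
    ((Dgraph n q).neighborSet (.inr (w, j)) \ Set.range fun k ↦ .inr (w, k)).ncard ≤ 2 := by
  have hsub : (Dgraph n q).neighborSet (.inr (w, j)) \ Set.range (fun k ↦ .inr (w, k)) ⊆
      insert (.inl w) ((fun u ↦ .inr (u, 0)) '' (pairGraph n).neighborSet w) := by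
    rintro (b | ⟨b, k⟩) ⟨hb, hbw⟩ <;> simp_all [Dgraph_eq_sup, cliqueMatching]
    grind
  have hpair : ((pairGraph n).neighborSet w).ncard ≤ 1 := by
    refine (Set.ncard_le_one).mpr fun u hu u' hu' ↦ ?_
    simp [pairGraph, Fin.ext_iff] at hu hu'
    omega
  refine (Set.ncard_le_ncard hsub).trans ((Set.ncard_insert_le _ _).trans ?_)
  grw [Set.ncard_image_le, hpair]

def cliqueFiber {V W : Type*} {q : ℕ} (π : V ⊕ V × Fin (q + 1) ≃ W ⊕ W × Fin (q + 1))
    (v : V) (w : W) : Set (Fin (q + 1)) :=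
  {k | ∃ j, π (.inr (v, k)) = .inr (w, j)}

section CheapBijection

variable {V : Type*} {G : SimpleGraph V} {n q : ℕ}
  {π : V ⊕ V × Fin (q + 1) ≃ Fin n ⊕ Fin n × Fin (q + 1)}

lemma exists_apply_inr_eq_inr (hn : 2 ≤ n)
    (hq : muEdit (extendCliques G q) (Dgraph n q) π + 3 < q) (v : V) (i : Fin (q + 1)) :
    ∃ w j, π (.inr (v, i)) = .inr (w, j) := by
  rcases hπ : π (.inr (v, i)) with w | ⟨w, j⟩
  · exfalso
    set B : Set (V ⊕ V × Fin (q + 1)) := (fun k ↦ .inr (v, k)) '' {i}ᶜ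
    have hB : ∀ b ∈ B, (extendCliques G q).Adj (.inr (v, i)) b := by
      rintro _ ⟨k, hk, rfl⟩
      simpa [eq_comm] using hk
    have hBcard : B.ncard = q := by
      have := Set.ncard_add_ncard_compl ({i} : Set (Fin (q + 1)))
      rw [Set.ncard_image_of_injective _ fun _ _ h ↦ by simpa using h]
      simp only [Set.ncard_singleton, Nat.card_eq_fintype_card, Fintype.card_fin] at this
      omega
    have hpos := ncard_le_posDeg_add (H := Dgraph n q) (π := π) hB
    rw [hπ] at hpos
    have hD : (π '' B ∩ (Dgraph n q).neighborSet (.inl w)).ncard ≤ 3 :=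
      (Set.ncard_le_ncard Set.inter_subset_right).trans (ncard_neighborSet_Dgraph_inl_le hn w)
    have := posDeg_le_muEdit (G := extendCliques G q) (H := Dgraph n q) (π := π) (.inl w)
    omega
  · exact ⟨w, j, rfl⟩

lemma ncard_compl_cliqueFiber_le {v : V} {i : Fin (q + 1)} {w : Fin n} {j : Fin (q + 1)}
    (h : π (.inr (v, i)) = .inr (w, j)) :
    (cliqueFiber π v w)ᶜ.ncard ≤ muEdit (extendCliques G q) (Dgraph n q) π + 2 := by
  set B : Set (V ⊕ V × Fin (q + 1)) := (fun k ↦ .inr (v, k)) '' (cliqueFiber π v w)ᶜ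
  have hB : ∀ b ∈ B, (extendCliques G q).Adj (.inr (v, i)) b := by
    rintro _ ⟨k, hk, rfl⟩
    refine extendCliques_adj_inr_inr.mpr ⟨rfl, ?_⟩
    rintro rfl
    exact hk ⟨j, h⟩
  have hBD : π '' B ∩ (Dgraph n q).neighborSet (.inr (w, j)) ⊆
      (Dgraph n q).neighborSet (.inr (w, j)) \ Set.range fun k ↦ .inr (w, k) := by
    rintro _ ⟨⟨_, ⟨k, hk, rfl⟩, rfl⟩, hadj⟩
    exact ⟨hadj, fun ⟨j', hj'⟩ ↦ hk ⟨j', hj'.symm⟩⟩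
  have hpos := ncard_le_posDeg_add (H := Dgraph n q) (π := π) hB
  rw [h, Set.ncard_image_of_injective _ fun _ _ h ↦ by simpa using h] at hpos
  have hD := (Set.ncard_le_ncard hBD).trans (ncard_neighborSet_Dgraph_inr_sdiff_le w j)
  have := posDeg_le_muEdit (G := extendCliques G q) (H := Dgraph n q) (π := π) (.inr (w, j))
  omega

/-- Each fibre of a clique of `G[q]` over the cliques of `D_{n,q}` misses at most `μ + 2` of its
`q + 1` vertices, so two distinct fibres would force `q + 1 ≤ 2μ + 4`. -/
lemma eq_of_apply_inr_eq_inr (hq : 2 * muEdit (extendCliques G q) (Dgraph n q) π + 4 ≤ q)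
    {v : V} {i i' : Fin (q + 1)} {w w' : Fin n} {j j' : Fin (q + 1)}
    (h : π (.inr (v, i)) = .inr (w, j)) (h' : π (.inr (v, i')) = .inr (w', j')) : w = w' := by
  by_contra hne
  have hS' : cliqueFiber π v w' ⊆ (cliqueFiber π v w)ᶜ := by
    rintro k ⟨j₁, hj₁⟩ ⟨j₂, hj₂⟩
    rw [hj₁] at hj₂
    exact hne (congrArg Prod.fst (Sum.inr_injective hj₂)).symm
  have := Set.ncard_add_ncard_compl (cliqueFiber π v w')
  simp only [Nat.card_eq_fintype_card, Fintype.card_fin] at this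
  have := Set.ncard_le_ncard hS'
  have := ncard_compl_cliqueFiber_le (G := G) h
  have := ncard_compl_cliqueFiber_le (G := G) h'
  omega

lemma muEdit_extendCliquesEquiv_le [Finite V] (σ : V ≃ Fin n)
    (hσ : ∀ v, π (.inl v) = .inl (σ v))
    (hclique : ∀ {v i i' w w' j j'}, π (.inr (v, i)) = .inr (w, j) →
      π (.inr (v, i')) = .inr (w', j') → w = w') :
    muEdit (extendCliques G q) (Dgraph n q) (extendCliquesEquiv q σ) ≤
      muEdit (extendCliques G q) (Dgraph n q) π := by
  have hσ' : ∀ a, π.symm (.inl a) = .inl (σ.symm a) := fun a ↦ by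
    rw [π.symm_apply_eq, hσ, σ.apply_symm_apply]
  have hinr : ∀ u k, ∃ v i, π (.inr (v, i)) = .inr (u, k) := by
    intro u k
    rcases hx : π.symm (.inr (u, k)) with v | ⟨v, i⟩
    · have := congrArg π hx
      rw [π.apply_symm_apply, hσ] at this
      cases this
    · exact ⟨v, i, by rw [← hx, π.apply_symm_apply]⟩
  refine Set.ncard_le_ncard (edgeSet_mono ?_) (Set.toFinite _)
  rw [mismatchGraph_extendCliquesEquiv]
  refine sup_le ?_ ?_
  · intro x y hxy
    obtain ⟨a, b, hab, rfl, rfl⟩ := (map_adj _ _ _ _).mp hxy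
    simpa [mismatchGraph_adj, hσ', Dgraph_eq_sup, cliqueMatching] using hab
  · -- the ends of a matching edge come from two different cliques of `G[q]`
    intro x y hxy
    obtain ⟨u, u', huu', rfl, rfl⟩ := (map_adj _ _ _ _).mp hxy
    obtain ⟨v, i, hv⟩ := hinr u 0
    obtain ⟨v', i', hv'⟩ := hinr u' 0
    refine mismatchGraph_adj.mpr (Or.inr ⟨?_, ?_⟩)
    · rw [Dgraph_eq_sup]
      exact Or.inr hxy
    · simp only [Equiv.coe_toEmbedding, map_equiv_adj, Function.Embedding.trans_apply,
        Function.Embedding.sectL_apply, Function.Embedding.inr_apply]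
      rw [← hv, ← hv', π.symm_apply_apply, π.symm_apply_apply, extendCliques_adj_inr_inr]
      rintro ⟨rfl, -⟩
      exact huu'.ne (hclique hv hv')

theorem exists_muEdit_extendCliquesEquiv_le [Fintype V] (hV : Fintype.card V = n) (hn : 2 ≤ n)
    (hq : 2 * muEdit (extendCliques G q) (Dgraph n q) π + 4 ≤ q) :
    ∃ σ : V ≃ Fin n, muEdit (extendCliques G q) (Dgraph n q) (extendCliquesEquiv q σ) ≤
      muEdit (extendCliques G q) (Dgraph n q) π := by
  choose w j hwj using exists_apply_inr_eq_inr (G := G) (π := π) hn (by omega)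
  let g : V × Fin (q + 1) → Fin n × Fin (q + 1) := fun p ↦ (w p.1 p.2, j p.1 p.2)
  have hg : g.Bijective := by
    refine (Fintype.bijective_iff_injective_and_card g).mpr ⟨fun p p' h ↦ ?_, by simp [hV]⟩
    have : π (.inr p) = π (.inr p') := by rw [hwj, hwj]; exact congrArg Sum.inr h
    exact Sum.inr_injective (π.injective this)
  obtain ⟨σ, hσ⟩ := π.exists_apply_inl_eq_inl (.ofBijective g hg) fun p ↦ hwj p.1 p.2
  exact ⟨σ, muEdit_extendCliquesEquiv_le σ hσ (eq_of_apply_inr_eq_inr hq)⟩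

end CheapBijection

end SimpleGraph

/-- Let `G` be a 3-regular graph on `n` vertices (`n` even, `n ≥ 4`) and
`q = 3n + 4`. Then `δ_edit(G[q], D_{n,q}) ≤ n` if and only if `G` has a Hamiltonian cycle. -/
theorem statement_4 {V : Type*} [Fintype V] [DecidableEq V] (n : ℕ) (hEven : Even n)
    (hn : 4 ≤ n) (G : SimpleGraph V) [DecidableRel G.Adj] (hcard : Fintype.card V = n)
    (hreg : G.IsRegularOfDegree 3) :
    deltaEdit (extendCliques G (3 * n + 4)) (Dgraph n (3 * n + 4)) ≤ n ↔
      G.IsHamiltonian := by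
  set q := 3 * n + 4
  have hG := hreg.two_mul_ncard_edgeSet
  have hC := (cycleGraph_isRegularOfDegree_two (n := n) (by omega)).two_mul_ncard_edgeSet
  have hM := (pairGraph_isRegularOfDegree_one hEven).two_mul_ncard_edgeSet
  rw [hcard] at hG
  rw [Fintype.card_fin] at hC hM
  rw [isHamiltonian_iff_exists_cycleGraph_le_map hcard (by omega)]
  constructor
  · intro hδ
    have : Nonempty (V ⊕ V × Fin (q + 1) ≃ Fin n ⊕ Fin n × Fin (q + 1)) :=
      ⟨extendCliquesEquiv q (Fintype.equivFinOfCardEq hcard)⟩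
    obtain ⟨π, hπ⟩ := exists_muEdit_eq_deltaEdit (G := extendCliques G q) (H := Dgraph n q)
    obtain ⟨σ, hσ⟩ := exists_muEdit_extendCliquesEquiv_le (G := G) (π := π) hcard (by omega)
      (by omega)
    rw [muEdit_extendCliquesEquiv] at hσ
    exact ⟨σ, (le_map_iff_muEdit_add_le G _ σ).mpr (by omega)⟩
  · rintro ⟨σ, hσ⟩
    have hcost := (le_map_iff_muEdit_add_le G _ σ).mp hσ
    have hlift := deltaEdit_le_muEdit (G := extendCliques G q) (H := Dgraph n q)
      (extendCliquesEquiv q σ)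
    rw [muEdit_extendCliquesEquiv] at hlift
    omega
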